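/- For every integer n ≥ 5, in the free group F on two generators x and y, the normal closure of the four elements y^{n!}, Π_{j=n!+1}^{2·n!}(x·y^j), Π_{j=2·n!+1}^{3·n!−1}(x·y^j), and Π_{j=3·n!+1}^{4·n!+1}(x·y^j) is the whole group F. Equivalently, the group presented on x, y with these four relators is trivial. (Asserted in Remark (ii) after Corollary 2.2 of the paper: Θ_∞ equals the normal closure of y^{n!} for every n ≥ 5.) -/
import Mathlib


/-- The ordered product `(g·h^a)(g·h^{a+1})⋯(g·h^b)`. -/
def seg {G : Type*} [Group G] (g h : G) (a b : ℕ) : G :=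
  ((List.range (b + 1 - a)).map (fun i => g * h ^ (a + i))).prod

lemma map_seg {G H : Type*} [Group G] [Group H] (f : G →* H) (g h : G) (a b : ℕ) :
    f (seg g h a b) = seg (f g) (f h) a b := by
  rw [seg, seg, ← List.prod_hom _ f, List.map_map]
  congr 1
  apply List.map_congr_left
  intro i _
  simp

lemma seg_succ {G : Type*} [Group G] (g h : G) (a b : ℕ) (hab : a ≤ b + 1) :
    seg g h a (b + 1) = seg g h a b * (g * h ^ (b + 1)) := by
  have h1 : b + 1 + 1 - a = (b + 1 - a) + 1 := by omega
  have h2 : a + (b + 1 - a) = b + 1 := by omega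
  rw [seg, h1, List.range_succ, List.map_append, List.prod_append]
  simp [seg, h2]

lemma seg_shift {G : Type*} [Group G] (g h : G) (m : ℕ) (hm : h ^ m = 1) (a b : ℕ) :
    seg g h (a + m) (b + m) = seg g h a b := by
  have h1 : b + m + 1 - (a + m) = b + 1 - a := by omega
  rw [seg, seg, h1]
  congr 1
  apply List.map_congr_left
  intro i _
  have : a + m + i = a + i + m := by ring
  rw [this, pow_add, hm, mul_one]

/-- From Remark (ii) after Corollary 2.2: for every `n ≥ 5`, the four listed words
normally generate the free group on `x, y`. -/
theorem stmt12 (n : ℕ) (hn : 5 ≤ n) :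
    Subgroup.normalClosure
      ({(FreeGroup.of 1 : FreeGroup (Fin 2)) ^ Nat.factorial n,
        seg (FreeGroup.of 0) (FreeGroup.of 1) (Nat.factorial n + 1) (2 * Nat.factorial n),
        seg (FreeGroup.of 0) (FreeGroup.of 1) (2 * Nat.factorial n + 1)
          (3 * Nat.factorial n - 1),
        seg (FreeGroup.of 0) (FreeGroup.of 1) (3 * Nat.factorial n + 1)
          (4 * Nat.factorial n + 1)} : Set (FreeGroup (Fin 2))) = ⊤ := by
  set m := Nat.factorial n with hm
  have hm120 : 120 ≤ m := by
    calc 120 = Nat.factorial 5 := by decide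
    _ ≤ m := Nat.factorial_le hn
  set S : Set (FreeGroup (Fin 2)) :=
    {(FreeGroup.of 1 : FreeGroup (Fin 2)) ^ m,
      seg (FreeGroup.of 0) (FreeGroup.of 1) (m + 1) (2 * m),
      seg (FreeGroup.of 0) (FreeGroup.of 1) (2 * m + 1) (3 * m - 1),
      seg (FreeGroup.of 0) (FreeGroup.of 1) (3 * m + 1) (4 * m + 1)} with hS
  set N := Subgroup.normalClosure S with hN
  have hmemS : ∀ s ∈ S, s ∈ N := fun s hs => Subgroup.subset_normalClosure hs
  let π := QuotientGroup.mk' N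
  set X : FreeGroup (Fin 2) ⧸ N := π (FreeGroup.of 0) with hX
  set Y : FreeGroup (Fin 2) ⧸ N := π (FreeGroup.of 1) with hY
  have hone : ∀ s ∈ S, π s = 1 := fun s hs => (QuotientGroup.eq_one_iff s).mpr (hmemS s hs)
  have hYm : Y ^ m = 1 := by
    rw [hY, ← map_pow]
    exact hone _ (by simp [hS])
  have h1 : seg X Y (m + 1) (2 * m) = 1 := by
    rw [hX, hY, ← map_seg]
    exact hone _ (by simp [hS])
  have h2 : seg X Y (2 * m + 1) (3 * m - 1) = 1 := by
    rw [hX, hY, ← map_seg]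
    exact hone _ (by simp [hS])
  have h3 : seg X Y (3 * m + 1) (4 * m + 1) = 1 := by
    rw [hX, hY, ← map_seg]
    exact hone _ (by simp [hS])
  -- shift exponents down by multiples of m
  have e1 : seg X Y 1 m = 1 := by
    have := seg_shift X Y m hYm 1 m
    rw [show 1 + m = m + 1 by ring, show m + m = 2 * m by ring] at this
    rw [← this]; exact h1
  have hY2 : Y ^ (2 * m) = 1 := by rw [two_mul, pow_add, hYm, one_mul]
  have hY3 : Y ^ (3 * m) = 1 := by
    rw [show 3 * m = 2 * m + m by ring, pow_add, hY2, hYm, one_mul]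
  have e2 : seg X Y 1 (m - 1) = 1 := by
    have t := seg_shift X Y (2 * m) hY2 1 (m - 1)
    rw [show 1 + 2 * m = 2 * m + 1 by ring, show m - 1 + 2 * m = 3 * m - 1 by omega] at t
    rw [← t]; exact h2
  have e3 : seg X Y 1 (m + 1) = 1 := by
    have t := seg_shift X Y (3 * m) hY3 1 (m + 1)
    rw [show 1 + 3 * m = 3 * m + 1 by ring, show m + 1 + 3 * m = 4 * m + 1 by ring] at t
    rw [← t]; exact h3
  -- split the products
  have s1 : seg X Y 1 m = seg X Y 1 (m - 1) * (X * Y ^ m) := by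
    have := seg_succ X Y 1 (m - 1) (by omega)
    rwa [show m - 1 + 1 = m by omega] at this
  have s2 : seg X Y 1 (m + 1) = seg X Y 1 m * (X * Y ^ (m + 1)) := by
    exact seg_succ X Y 1 m (by omega)
  rw [e2, one_mul, hYm, mul_one] at s1
  have hXone : X = 1 := by rw [← s1, e1]
  have hYone : Y = 1 := by
    rw [e3, e1, one_mul, pow_succ, hYm, one_mul, hXone, one_mul] at s2
    exact s2.symm
  -- conclude N = ⊤
  rw [eq_top_iff]
  intro g _
  have : π = (1 : FreeGroup (Fin 2) →* FreeGroup (Fin 2) ⧸ N) := by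
    apply FreeGroup.ext_hom
    intro i
    fin_cases i
    · exact hXone
    · exact hYone
  have hg : π g = 1 := by rw [this]; rfl
  exact (QuotientGroup.eq_one_iff g).mp hg
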